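/- Let A, η ∈ C²(ℝ) be strictly convex with entropy flux q, q' = η'A'. If u > u_L > u_R, then η(u|u_R) - η(u|u_L) > 0 and, whenever this difference is nonzero, (q(u;u_R) - q(u;u_L))/(η(u|u_R) - η(u|u_L)) < A'(u). -/

import Mathlib

/-!
Both differences are integrals over `[uR, uL]` of `η''` against a weight: differentiating in the
second argument, `∂_b η(u|b) = -η''(b) (u - b)` and, thanks to `q' = η' A'`,
`∂_b q(u;b) = -η''(b) (A(u) - A(b))`. Hence the entropy difference is at least
`(u - uL) (η'(uL) - η'(uR))`, and `A'(u) · (entropy difference) - (flux difference)` is at least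
`(A'(u) (u - uL) - (A(u) - A(uL))) (η'(uL) - η'(uR))`, the weight `A'(u) (u - b) - (A(u) - A(b))`
being smallest at `b = uL` by convexity of `A`. Strict convexity makes both lower bounds positive.
Instead of integrating, the bounds are obtained by comparing derivatives on `[uR, uL]`.
-/

open Set

noncomputable def relEntropy (η : ℝ → ℝ) (a b : ℝ) : ℝ := η a - η b - deriv η b * (a - b)

noncomputable def relEntropyFlux (η A q : ℝ → ℝ) (a b : ℝ) : ℝ :=
  q a - q b - deriv η b * (A a - A b)

theorem ContDiff.differentiable_deriv_of_two {f : ℝ → ℝ} (hf : ContDiff ℝ 2 f) :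
    Differentiable ℝ (deriv f) :=
  (contDiff_succ_iff_deriv.mp (by exact_mod_cast hf : ContDiff ℝ (1 + 1) f)).2.2.differentiable
    one_ne_zero

theorem ConvexOn.sub_le_deriv_mul_sub {f : ℝ → ℝ} (hfc : ConvexOn ℝ univ f)
    (hf : Differentiable ℝ f) {x y z : ℝ} (hxy : x ≤ y) (hyz : y ≤ z) :
    f y - f x ≤ deriv f z * (y - x) := by
  rcases hxy.eq_or_lt with rfl | hxy
  · simp
  have hslope := hfc.slope_le_deriv (mem_univ x) (mem_univ y) hxy (hf y)
  have hderiv := hfc.monotoneOn_deriv (fun w _ => hf w) (mem_univ y) (mem_univ z) hyz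
  rw [slope_def_field, div_le_iff₀ (sub_pos.mpr hxy)] at hslope
  nlinarith

theorem ConvexOn.deriv_deriv_nonneg {f : ℝ → ℝ} (hfc : ConvexOn ℝ univ f)
    (hf : Differentiable ℝ f) (x : ℝ) : 0 ≤ deriv (deriv f) x :=
  (monotoneOn_univ.mp (hfc.monotoneOn_deriv fun w _ => hf w)).deriv_nonneg

theorem mul_sub_le_sub_of_hasDerivAt {f g f' g' : ℝ → ℝ} {a b c : ℝ} (hab : a ≤ b)
    (hf : ∀ x ∈ Icc a b, HasDerivAt f (f' x) x) (hg : ∀ x ∈ Icc a b, HasDerivAt g (g' x) x)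
    (hfg : ∀ x ∈ Ioo a b, c * g' x ≤ f' x) : c * (g b - g a) ≤ f b - f a := by
  have hderiv : ∀ x ∈ Icc a b, HasDerivAt (fun x => f x - c * g x) (f' x - c * g' x) x :=
    fun x hx => (hf x hx).sub ((hg x hx).const_mul c)
  have hmono : MonotoneOn (fun x => f x - c * g x) (Icc a b) := by
    refine monotoneOn_of_hasDerivWithinAt_nonneg (f' := fun x => f' x - c * g' x) (convex_Icc a b)
      (fun x hx => (hderiv x hx).continuousAt.continuousWithinAt) (fun x hx => ?_) (fun x hx => ?_)
    · rw [interior_Icc] at hx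
      exact (hderiv x (Ioo_subset_Icc_self hx)).hasDerivWithinAt
    · rw [interior_Icc] at hx
      exact sub_nonneg.mpr (hfg x hx)
  have := hmono (left_mem_Icc.mpr hab) (right_mem_Icc.mpr hab) hab
  linarith

theorem hasDerivAt_relEntropy_right {η : ℝ → ℝ} {a b : ℝ} (hη : DifferentiableAt ℝ η b)
    (hη' : DifferentiableAt ℝ (deriv η) b) :
    HasDerivAt (relEntropy η a) (-(deriv (deriv η) b * (a - b))) b := by
  have h := (hη.hasDerivAt.const_sub (η a)).sub
    (hη'.hasDerivAt.mul ((hasDerivAt_id' b).const_sub a))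
  exact h.congr_deriv (by ring)

theorem hasDerivAt_relEntropyFlux_right {η A q : ℝ → ℝ} {a b : ℝ} (hA : DifferentiableAt ℝ A b)
    (hη' : DifferentiableAt ℝ (deriv η) b) (hq : HasDerivAt q (deriv η b * deriv A b) b) :
    HasDerivAt (relEntropyFlux η A q a) (-(deriv (deriv η) b * (A a - A b))) b := by
  have h := (hq.const_sub (q a)).sub (hη'.hasDerivAt.mul (hA.hasDerivAt.const_sub (A a)))
  exact h.congr_deriv (by ring)

theorem mul_deriv_sub_le_relEntropy_sub {η : ℝ → ℝ} (hηd : Differentiable ℝ η)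
    (hη'd : Differentiable ℝ (deriv η)) (hηc : ConvexOn ℝ univ η) {u uL uR : ℝ} (h1 : uR ≤ uL) :
    (u - uL) * (deriv η uL - deriv η uR) ≤ relEntropy η u uR - relEntropy η u uL := by
  have hη'' := hηc.deriv_deriv_nonneg hηd
  have h := mul_sub_le_sub_of_hasDerivAt (f := fun b => -relEntropy η u b) (c := u - uL) h1
    (fun x _ => (hasDerivAt_relEntropy_right (hηd x) (hη'd x)).neg)
    (fun x _ => (hη'd x).hasDerivAt)
    (fun x hx => by
      rw [neg_neg, mul_comm]
      exact mul_le_mul_of_nonneg_left (by linarith [hx.2]) (hη'' x))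
  linarith

theorem mul_deriv_sub_le_relEntropyFlux_sub {η A q : ℝ → ℝ} (hηd : Differentiable ℝ η)
    (hη'd : Differentiable ℝ (deriv η)) (hηc : ConvexOn ℝ univ η) (hA : Differentiable ℝ A)
    (hAc : ConvexOn ℝ univ A)
    (hq : ∀ b, HasDerivAt q (deriv η b * deriv A b) b) {u uL uR : ℝ} (h1 : uR ≤ uL)
    (h2 : uL ≤ u) :
    (deriv A u * (u - uL) - (A u - A uL)) * (deriv η uL - deriv η uR) ≤
      deriv A u * (relEntropy η u uR - relEntropy η u uL) -
        (relEntropyFlux η A q u uR - relEntropyFlux η A q u uL) := by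
  have hη'' := hηc.deriv_deriv_nonneg hηd
  have h := mul_sub_le_sub_of_hasDerivAt
    (f := fun b => relEntropyFlux η A q u b - deriv A u * relEntropy η u b)
    (c := deriv A u * (u - uL) - (A u - A uL)) h1
    (fun x _ => (hasDerivAt_relEntropyFlux_right (hA x) (hη'd x) (hq x)).sub
      ((hasDerivAt_relEntropy_right (hηd x) (hη'd x)).const_mul (deriv A u)))
    (fun x _ => (hη'd x).hasDerivAt)
    (fun x hx => by
      have hsecant := hAc.sub_le_deriv_mul_sub hA hx.2.le h2
      nlinarith [hη'' x])
  linarith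

theorem stmt_9 (A η q : ℝ → ℝ)
    (hA : ContDiff ℝ 2 A) (hAc : StrictConvexOn ℝ Set.univ A)
    (hη : ContDiff ℝ 2 η) (hηc : StrictConvexOn ℝ Set.univ η)
    (hqd : Differentiable ℝ q)
    (hq : ∀ u, deriv q u = deriv η u * deriv A u)
    (u uL uR : ℝ) (h1 : uR < uL) (h2 : uL < u) :
    0 < (η u - η uR - deriv η uR * (u - uR)) - (η u - η uL - deriv η uL * (u - uL)) ∧
      ((q u - q uR - deriv η uR * (A u - A uR)) -
          (q u - q uL - deriv η uL * (A u - A uL))) /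
        ((η u - η uR - deriv η uR * (u - uR)) -
          (η u - η uL - deriv η uL * (u - uL))) < deriv A u := by
  show 0 < relEntropy η u uR - relEntropy η u uL ∧
    (relEntropyFlux η A q u uR - relEntropyFlux η A q u uL) /
      (relEntropy η u uR - relEntropy η u uL) < deriv A u
  have hAd := hA.differentiable (by norm_num)
  have hηd := hη.differentiable (by norm_num)
  have hjump : 0 < deriv η uL - deriv η uR :=
    sub_pos.mpr (hηc.strictMonoOn_deriv (fun x _ => hηd x) (mem_univ uR) (mem_univ uL) h1)
  have hgap : 0 < deriv A u * (u - uL) - (A u - A uL) := by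
    have h := hAc.slope_lt_deriv (mem_univ uL) (mem_univ u) h2 (hAd u)
    rw [slope_def_field, div_lt_iff₀ (sub_pos.mpr h2)] at h
    linarith
  have hη'd := hη.differentiable_deriv_of_two
  have hE := mul_deriv_sub_le_relEntropy_sub (u := u) hηd hη'd hηc.convexOn h1.le
  have hF := mul_deriv_sub_le_relEntropyFlux_sub hηd hη'd hηc.convexOn hAd hAc.convexOn
    (fun b => hq b ▸ (hqd b).hasDerivAt) h1.le h2.le
  have hpos : 0 < relEntropy η u uR - relEntropy η u uL :=
    (mul_pos (sub_pos.mpr h2) hjump).trans_le hE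
  refine ⟨hpos, ?_⟩
  rw [div_lt_iff₀ hpos]
  linarith [mul_pos hgap hjump]
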